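/- Let Φ be a reduced crystallographic root system with simple roots α_1, …, α_n, coroot lattice R^∨, coweight lattice Q^∨, and Weyl group W, and let w₀ ∈ W satisfy w₀² = I and w₀ρ̌ = −ρ̌. Let λ ∈ Q^∨ and η ∈ Q^∨ with ⟨α_i, η⟩ = 1, η − λ ∈ R^∨, and proj_i(λ − 2ρ̌) = proj_i(η). Set ζ := ρ̌ + w₀s_i(λ − ρ̌), b := t^η s_i ∈ W̃, and s_{i₁} := w₀ s_i w₀. Then: (1) there exists an integer d_i ∈ ℤ with s_i w₀ ζ − η = d_i·α_i^∨; and (2) for this d_i, setting y := t^{d_i·w₀s_iη}(w₀s_i) ∈ W̃, one has y b y⁻¹ = t^ζ s_{i₁}. -/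

import Mathlib

open scoped RealInnerProductSpace

namespace ADLV

variable {V : Type*} [NormedAddCommGroup V] [InnerProductSpace ℝ V]

/-- The coroot `α^∨ = 2α/(α,α)` of a root `α`. -/
noncomputable def coroot (α : V) : V := (2 / ⟪α, α⟫) • α

/-- The reflection `s_α : x ↦ x - ⟨α, x⟩ α^∨` in the hyperplane orthogonal to `α`,
as a linear automorphism. -/
noncomputable def sRefl (α : V) (hα : α ≠ 0) : V ≃ₗ[ℝ] V :=
  Module.reflection (f := (innerSL ℝ α : V →ₗ[ℝ] ℝ)) (x := coroot α)
    (by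
      have h : ⟪α, α⟫ ≠ 0 := inner_self_ne_zero.mpr hα
      simp [coroot, real_inner_smul_right]
      field_simp)

/-- The orthogonal projection `proj_α : x ↦ x - ½⟨α, x⟩ α^∨` of `V` onto the
hyperplane `H_α = {x : ⟨α, x⟩ = 0}`. -/
noncomputable def projH (α : V) (x : V) : V := x - (⟪α, x⟫ / 2) • coroot α

/-- The (finite) Weyl group: the group generated by the simple reflections. -/
noncomputable def weylGroup {n : ℕ} (α : Fin n → V) (hα : ∀ j, α j ≠ 0) :
    Subgroup (V ≃ₗ[ℝ] V) :=
  Subgroup.closure (Set.range fun j => sRefl (α j) (hα j))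

/-- The coroot lattice `R^∨ = ⊕_j ℤ α_j^∨`. -/
noncomputable def corootLattice {n : ℕ} (α : Fin n → V) : AddSubgroup V :=
  AddSubgroup.closure (Set.range fun j => coroot (α j))

/-- The coweight lattice `Q^∨ = {x : ⟨α_j, x⟩ ∈ ℤ for all j}`. -/
def coweightLattice {n : ℕ} (α : Fin n → V) : Set V :=
  {x : V | ∀ j, ∃ m : ℤ, ⟪α j, x⟫ = (m : ℝ)}

/-- Elements `t^μ u` of the (extended) affine Weyl group `Q^∨ ⋊ W`, realized inside the
semidirect product `V ⋊ GL(V)` with multiplication `(t^μ u)(t^λ v) = t^{μ + uλ}(uv)`. -/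
@[ext]
structure Aff (V : Type*) [NormedAddCommGroup V] [InnerProductSpace ℝ V] where
  /-- the translation part -/
  t : V
  /-- the linear part -/
  w : V ≃ₗ[ℝ] V

namespace Aff

instance : Mul (Aff V) := ⟨fun a b => ⟨a.t + a.w b.t, a.w * b.w⟩⟩
instance : One (Aff V) := ⟨⟨0, 1⟩⟩
instance : Inv (Aff V) := ⟨fun a => ⟨-(a.w⁻¹ a.t), a.w⁻¹⟩⟩

@[simp] lemma mul_t (a b : Aff V) : (a * b).t = a.t + a.w b.t := rfl
@[simp] lemma mul_w (a b : Aff V) : (a * b).w = a.w * b.w := rfl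
@[simp] lemma one_t : (1 : Aff V).t = 0 := rfl
@[simp] lemma one_w : (1 : Aff V).w = 1 := rfl
@[simp] lemma inv_t (a : Aff V) : (a⁻¹).t = -(a.w⁻¹ a.t) := rfl
@[simp] lemma inv_w (a : Aff V) : (a⁻¹).w = a.w⁻¹ := rfl

lemma mul_apply_w (f g : V ≃ₗ[ℝ] V) (x : V) : (f * g) x = f (g x) := rfl

instance : Group (Aff V) where
  mul_assoc a b c := by
    refine Aff.ext ?_ ?_
    · simp [mul_apply_w, map_add, add_assoc]
    · simp [mul_assoc]
  one_mul a := by refine Aff.ext ?_ ?_ <;> simp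
  mul_one a := by refine Aff.ext ?_ ?_ <;> simp
  inv_mul_cancel a := by
    refine Aff.ext ?_ ?_
    · simp [mul_apply_w]
    · simp

end Aff

/-! Expanding `ζ`, the defect `s_i w₀ ζ - η` equals `(λ - η) - 2ρ̌ + α_i^∨`. The projection
hypothesis puts it on the line `ℝ α_i^∨`; it lies in `R^∨` because `2ρ̌ = ρ̌ - w₀ρ̌` and the Weyl
group moves `Q^∨` only by elements of `R^∨` (the Cartan integers are integers). Linear independence
of the coroots then makes its coefficient an integer. The conjugation identity is the formula
`(t^μ u)(t^η v)(t^μ u)⁻¹ = t^{μ + uη - uvu⁻¹μ} uvu⁻¹` together with `s_i η = η - α_i^∨`. -/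

lemma exists_int_eq_of_smul_mem_span_int {ι M : Type*} [Fintype ι] [AddCommGroup M]
    [Module ℝ M] {v : ι → M} (hv : LinearIndependent ℝ v) {t : ℝ} {i : ι}
    (h : t • v i ∈ Submodule.span ℤ (Set.range v)) : ∃ d : ℤ, t = d := by
  classical
  obtain ⟨c, hc⟩ := (Submodule.mem_span_range_iff_exists_fun ℤ).mp h
  refine ⟨c i, ?_⟩
  have hsum : ∑ j, (c j : ℝ) • v j = ∑ j, (Pi.single i t : ι → ℝ) j • v j := by
    simpa [Int.cast_smul_eq_zsmul, Pi.single_apply] using hc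
  simpa using (hv.eq_coords_of_eq hsum i).symm

section

variable {V : Type*} [NormedAddCommGroup V] [InnerProductSpace ℝ V] {n : ℕ}

lemma sRefl_apply (α : V) (hα : α ≠ 0) (x : V) :
    sRefl α hα x = x - ⟪α, x⟫ • coroot α := by
  simp [sRefl, Module.reflection_apply]

lemma sRefl_sRefl (α : V) (hα : α ≠ 0) (x : V) : sRefl α hα (sRefl α hα x) = x :=
  Module.involutive_reflection _ x

lemma sRefl_inv (α : V) (hα : α ≠ 0) : (sRefl α hα)⁻¹ = sRefl α hα :=
  inv_eq_of_mul_eq_one_right <| LinearEquiv.ext <| sRefl_sRefl α hα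

lemma sRefl_coroot (α : V) (hα : α ≠ 0) : sRefl α hα (coroot α) = -coroot α := by
  have hαα : ⟪α, coroot α⟫ = 2 := by
    rw [coroot, real_inner_smul_right]
    field_simp [inner_self_ne_zero.mpr hα]
  rw [sRefl_apply, hαα, two_smul]
  abel

lemma sub_eq_smul_coroot_of_projH_eq {α x y : V} (h : projH α x = projH α y) :
    x - y = ((⟪α, x⟫ - ⟪α, y⟫) / 2) • coroot α := by
  rw [projH, projH, sub_eq_sub_iff_sub_eq_sub] at h
  rw [h, ← sub_smul, sub_div]

lemma linearIndependent_coroot {n : ℕ} {α : Fin n → V} (hlin : LinearIndependent ℝ α) :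
    LinearIndependent ℝ (fun j => coroot (α j)) := by
  have hunit : ∀ j, (2 / ⟪α j, α j⟫ : ℝ) ≠ 0 := fun j =>
    div_ne_zero two_ne_zero (inner_self_ne_zero.mpr (hlin.ne_zero j))
  exact hlin.units_smul fun j => Units.mk0 _ (hunit j)

def coweightStabilizer (α : Fin n → V) : Submonoid (V ≃ₗ[ℝ] V) where
  carrier := {w | ∀ x ∈ coweightLattice α, w x ∈ coweightLattice α ∧ w x - x ∈ corootLattice α}
  one_mem' x hx := by simpa using hx
  mul_mem' {u v} hu hv x hx := by
    obtain ⟨hvx, hvx'⟩ := hv x hx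
    obtain ⟨huvx, huvx'⟩ := hu (v x) hvx
    refine ⟨huvx, ?_⟩
    rw [Aff.mul_apply_w, ← sub_add_sub_cancel _ (v x)]
    exact add_mem huvx' hvx'

lemma sRefl_mem_coweightStabilizer {α : Fin n → V} (hα : ∀ j, α j ≠ 0)
    (hcart : ∀ k j, ∃ m : ℤ, ⟪α k, coroot (α j)⟫ = (m : ℝ)) (j : Fin n) :
    sRefl (α j) (hα j) ∈ coweightStabilizer α := by
  intro x hx
  obtain ⟨m, hm⟩ := hx j
  refine ⟨fun k => ?_, ?_⟩
  · obtain ⟨m', hm'⟩ := hx k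
    obtain ⟨c, hc⟩ := hcart k j
    refine ⟨m' - m * c, ?_⟩
    rw [sRefl_apply, inner_sub_right, real_inner_smul_right, hm, hm', hc]
    push_cast
    ring
  · rw [sRefl_apply, sub_sub_cancel_left, hm, ← neg_smul, ← Int.cast_neg, Int.cast_smul_eq_zsmul]
    exact AddSubgroup.zsmul_mem _ (AddSubgroup.subset_closure (Set.mem_range_self j)) _

lemma weylGroup_le_coweightStabilizer {α : Fin n → V} (hα : ∀ j, α j ≠ 0)
    (hcart : ∀ k j, ∃ m : ℤ, ⟪α k, coroot (α j)⟫ = (m : ℝ)) :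
    (weylGroup α hα).toSubmonoid ≤ coweightStabilizer α := by
  intro w hw
  induction hw using Subgroup.closure_induction'' with
  | mem _ hx =>
    obtain ⟨j, rfl⟩ := hx
    exact sRefl_mem_coweightStabilizer hα hcart j
  | inv_mem _ hx =>
    obtain ⟨j, rfl⟩ := hx
    rw [sRefl_inv]
    exact sRefl_mem_coweightStabilizer hα hcart j
  | one => exact one_mem _
  | mul _ _ _ _ hu hv => exact mul_mem hu hv

lemma two_smul_mem_corootLattice_of_map_eq_neg {α : Fin n → V} {hα : ∀ j, α j ≠ 0}
    (hcart : ∀ k j, ∃ m : ℤ, ⟪α k, coroot (α j)⟫ = (m : ℝ)) {w : V ≃ₗ[ℝ] V}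
    (hw : w ∈ weylGroup α hα) {x : V} (hx : x ∈ coweightLattice α) (hwx : w x = -x) :
    (2 : ℝ) • x ∈ corootLattice α := by
  have h := neg_mem (weylGroup_le_coweightStabilizer hα hcart hw x hx).2
  rwa [hwx, neg_sub, sub_neg_eq_add, ← two_smul ℝ] at h

lemma exists_int_eq_of_smul_coroot_mem_corootLattice {α : Fin n → V}
    (hlin : LinearIndependent ℝ α) {i : Fin n} {t : ℝ} (h : t • coroot (α i) ∈ corootLattice α) :
    ∃ d : ℤ, t = d := by
  rw [corootLattice, ← Submodule.span_int_eq_addSubgroupClosure] at h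
  exact exists_int_eq_of_smul_mem_span_int (linearIndependent_coroot hlin) h

lemma Aff.mk_mul_mk_mul_inv (μ η : V) (u v : V ≃ₗ[ℝ] V) :
    Aff.mk μ u * Aff.mk η v * (Aff.mk μ u)⁻¹ = Aff.mk (μ + u η - (u * v * u⁻¹) μ) (u * v * u⁻¹) := by
  ext1
  · simp [sub_eq_add_neg]
  · simp [mul_assoc]

end

theorem conjugation_to_final_alcove_general {n : ℕ}
    (α : Fin n → V) (hα : ∀ j, α j ≠ 0)
    (hlin : LinearIndependent ℝ α)
    -- crystallographic: the Cartan integers `⟨α_k, α_j^∨⟩` are integers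
    (hcart : ∀ k j, ∃ m : ℤ, ⟪α k, coroot (α j)⟫ = (m : ℝ))
    -- `ρ̌` is the half-sum of the positive coroots, so `⟨α_j, ρ̌⟩ = 1` for all `j`
    (ρv : V) (hρ : ∀ j, ⟪α j, ρv⟫ = 1)
    (w₀ : V ≃ₗ[ℝ] V) (hw₀W : w₀ ∈ weylGroup α hα)
    (hw₀2 : w₀ * w₀ = 1) (hw₀ρ : w₀ ρv = -ρv)
    (i : Fin n) (lam η : V)
    (hηi : ⟪α i, η⟫ = 1) (hηlam : η - lam ∈ corootLattice α)
    (hproj : projH (α i) (lam - (2 : ℝ) • ρv) = projH (α i) η) :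
    (∃ d : ℤ, sRefl (α i) (hα i) (w₀ (ρv + w₀ (sRefl (α i) (hα i) (lam - ρv)))) - η
        = (d : ℝ) • coroot (α i)) ∧
    (∀ d : ℤ, sRefl (α i) (hα i) (w₀ (ρv + w₀ (sRefl (α i) (hα i) (lam - ρv)))) - η
        = (d : ℝ) • coroot (α i) →
      Aff.mk ((d : ℝ) • (w₀ (sRefl (α i) (hα i) η))) (w₀ * sRefl (α i) (hα i))
          * Aff.mk η (sRefl (α i) (hα i))
          * (Aff.mk ((d : ℝ) • (w₀ (sRefl (α i) (hα i) η))) (w₀ * sRefl (α i) (hα i)))⁻¹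
        = Aff.mk (ρv + w₀ (sRefl (α i) (hα i) (lam - ρv)))
            (w₀ * sRefl (α i) (hα i) * w₀)) := by
  set s := sRefl (α i) (hα i)
  set ζ := ρv + w₀ (s (lam - ρv))
  have hw₀w₀ (x : V) : w₀ (w₀ x) = x := LinearEquiv.congr_fun hw₀2 x
  have hss (x : V) : s (s x) = x := sRefl_sRefl _ _ x
  have hdefect : s (w₀ ζ) - η = (lam - (2 : ℝ) • ρv - η) + coroot (α i) := by
    rw [map_add, hw₀ρ, hw₀w₀, map_add, map_neg, hss, sRefl_apply _ _ ρv, hρ i, one_smul]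
    module
  refine ⟨?_, fun d hd => ?_⟩
  · have hline : s (w₀ ζ) - η
        = ((⟪α i, lam - (2 : ℝ) • ρv⟫ - ⟪α i, η⟫) / 2 + 1) • coroot (α i) := by
      rw [hdefect, sub_eq_smul_coroot_of_projH_eq hproj, add_smul, one_smul]
    have hρQ : ρv ∈ coweightLattice α := fun j => ⟨1, by rw [hρ j, Int.cast_one]⟩
    have hmem : s (w₀ ζ) - η ∈ corootLattice α := by
      rw [hdefect, show lam - (2 : ℝ) • ρv - η = -(η - lam) - (2 : ℝ) • ρv by abel]
      refine add_mem (sub_mem (neg_mem hηlam) ?_) (AddSubgroup.subset_closure ⟨i, rfl⟩)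
      exact two_smul_mem_corootLattice_of_map_eq_neg hcart hw₀W hρQ hw₀ρ
    rw [hline] at hmem ⊢
    obtain ⟨d, hd⟩ := exists_int_eq_of_smul_coroot_mem_corootLattice hlin hmem
    exact ⟨d, by rw [hd]⟩
  · have hsη : s η = η - coroot (α i) := by rw [sRefl_apply, hηi, one_smul]
    have hζ : ζ = w₀ (s (η + (d : ℝ) • coroot (α i))) := by
      rw [← hd, add_sub_cancel, hss, hw₀w₀]
    have hconj : w₀ * s * s * (w₀ * s)⁻¹ = w₀ * s * w₀ := by
      simp [mul_assoc, inv_eq_of_mul_eq_one_right hw₀2]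
    rw [Aff.mk_mul_mk_mul_inv, hconj, hζ]
    congr 1
    simp only [Aff.mul_apply_w, map_add, map_smul, hw₀w₀, hss]
    rw [sRefl_coroot, hsη, map_neg, map_sub]
    module

/-- Keep the setup of the folded gallery: `w₀ ∈ W` with `w₀² = I` and
`w₀ ρ̌ = -ρ̌`; `λ, η ∈ Q^∨` with `⟨α_i, η⟩ = 1`, `η - λ ∈ R^∨` and
`proj_i (λ - 2ρ̌) = proj_i η`.  Set `ζ := ρ̌ + w₀ s_i (λ - ρ̌)`, `b := t^η s_i ∈ W̃` and
`s_{i₁} := w₀ s_i w₀`.  Then: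
(1) there is `d_i ∈ ℤ` with `s_i w₀ ζ - η = d_i • α_i^∨`; and
(2) for this `d_i`, setting `y := t^{d_i • w₀ s_i η} (w₀ s_i) ∈ W̃`, one has
`y b y⁻¹ = t^ζ s_{i₁}`. -/
theorem conjugation_to_final_alcove {n : ℕ}
    (α : Fin n → V) (hα : ∀ j, α j ≠ 0)
    (hlin : LinearIndependent ℝ α)
    -- crystallographic: the Cartan integers `⟨α_k, α_j^∨⟩` are integers
    (hcart : ∀ k j, ∃ m : ℤ, ⟪α k, coroot (α j)⟫ = (m : ℝ))
    -- `ρ̌` is the half-sum of the positive coroots, so `⟨α_j, ρ̌⟩ = 1` for all `j`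
    (ρv : V) (hρ : ∀ j, ⟪α j, ρv⟫ = 1)
    (w₀ : V ≃ₗ[ℝ] V) (hw₀W : w₀ ∈ weylGroup α hα)
    (hw₀2 : w₀ * w₀ = 1) (hw₀ρ : w₀ ρv = -ρv)
    (i : Fin n) (lam η : V)
    (hlam : lam ∈ coweightLattice α) (hη : η ∈ coweightLattice α)
    (hηi : ⟪α i, η⟫ = 1) (hηlam : η - lam ∈ corootLattice α)
    (hproj : projH (α i) (lam - (2 : ℝ) • ρv) = projH (α i) η) :
    (∃ d : ℤ, sRefl (α i) (hα i) (w₀ (ρv + w₀ (sRefl (α i) (hα i) (lam - ρv)))) - η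
        = (d : ℝ) • coroot (α i)) ∧
    (∀ d : ℤ, sRefl (α i) (hα i) (w₀ (ρv + w₀ (sRefl (α i) (hα i) (lam - ρv)))) - η
        = (d : ℝ) • coroot (α i) →
      Aff.mk ((d : ℝ) • (w₀ (sRefl (α i) (hα i) η))) (w₀ * sRefl (α i) (hα i))
          * Aff.mk η (sRefl (α i) (hα i))
          * (Aff.mk ((d : ℝ) • (w₀ (sRefl (α i) (hα i) η))) (w₀ * sRefl (α i) (hα i)))⁻¹
        = Aff.mk (ρv + w₀ (sRefl (α i) (hα i) (lam - ρv)))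
            (w₀ * sRefl (α i) (hα i) * w₀)) :=
  conjugation_to_final_alcove_general α hα hlin hcart ρv hρ w₀ hw₀W hw₀2 hw₀ρ i lam η hηi hηlam
    hproj

end ADLV
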